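/- Let R be a finite p-group acting uniserially on a free ℤ_p-module T of finite rank d, with lower R-central series T = T₀ > T₁ > ⋯. Then T_{n+d} = p·T_n for all n ≥ 0. -/

import Mathlib

/-!
Multiplication by `p` commutes with `R`, so `T_{n+d} = p T_n` follows from `T_d = p T` by
applying `[R, -]` another `n` times.

Since `R` is a `p`-group and `T / p T` is a finite elementary abelian `p`-group, the semidirect
product `(T / p T) ⋊ R` is a finite `p`-group, hence nilpotent; its lower central series contains
the images of the `T_i`, so `T_N ≤ p T` for some `N`. The subgroups `T_i + p T` then decrease
strictly until they reach `p T`, and `[T : p T] = p ^ d`, so `T_d ≤ p T`. Uniseriality gives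
`[T : T_d] = p ^ d` as well, hence `T_d = p T`.
-/

variable (R : Type*) [Group R] (T : Type*) [AddCommGroup T] [DistribMulAction R T]

/-- The lower `R`-central series: `T₀ = T`, `T_{i+1} = [R, T_i]`. -/
def lowerRCentral : ℕ → AddSubgroup T
  | 0 => ⊤
  | (i + 1) => AddSubgroup.closure {x | ∃ t ∈ lowerRCentral i, ∃ g : R, x = g • t - t}

/-- `R` acts uniserially on `T` if `[T_i : T_{i+1}] = p` whenever `T_i ≠ 0`. -/
def IsUniserial (p : ℕ) : Prop :=
  ∀ i : ℕ, lowerRCentral R T i ≠ ⊥ →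
    (lowerRCentral R T (i + 1)).relIndex (lowerRCentral R T i) = p

namespace Subgroup

variable {G : Type*} [Group G] {H K : Subgroup G}

@[to_additive]
lemma eq_of_le_of_index_eq (hHK : H ≤ K) (hidx : K.index = H.index) (hH : H.index ≠ 0) :
    H = K :=
  have : H.FiniteIndex := ⟨hH⟩
  hHK.lt_or_eq.resolve_left fun hlt => (index_strictAnti hlt).ne hidx

@[to_additive]
lemma prime_dvd_relIndex_of_lt {p m : ℕ} (hp : p.Prime) (hHK : H < K) (hH : H.index ∣ p ^ m) :
    p ∣ H.relIndex K := by
  obtain ⟨e, -, he⟩ := (Nat.dvd_prime_pow hp).1 ((relIndex_dvd_index_of_le hHK.le).trans hH)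
  have he0 : e ≠ 0 := by
    rintro rfl
    exact hHK.not_ge (relIndex_eq_one.1 (he.trans (pow_zero p)))
  exact he ▸ dvd_pow_self p he0

end Subgroup

section LowerRCentral

variable {R T}
variable {V : Type*} [AddCommGroup V] [DistribMulAction R V]

variable (R) in
def actionCommutator (A : AddSubgroup T) : AddSubgroup T :=
  AddSubgroup.closure {x | ∃ t ∈ A, ∃ g : R, x = g • t - t}

lemma lowerRCentral_succ (i : ℕ) :
    lowerRCentral R T (i + 1) = actionCommutator R (lowerRCentral R T i) :=
  rfl

lemma actionCommutator_mono {A B : AddSubgroup T} (h : A ≤ B) :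
    actionCommutator R A ≤ actionCommutator R B :=
  AddSubgroup.closure_mono fun _ ⟨t, ht, g, hx⟩ => ⟨t, h ht, g, hx⟩

lemma actionCommutator_le_of_smul_mem {A : AddSubgroup T} (hA : ∀ g : R, ∀ x ∈ A, g • x ∈ A) :
    actionCommutator R A ≤ A :=
  (AddSubgroup.closure_le _).2 fun _ ⟨t, ht, g, hx⟩ => hx ▸ sub_mem (hA g t ht) ht

lemma actionCommutator_sup (A B : AddSubgroup T) :
    actionCommutator R (A ⊔ B) = actionCommutator R A ⊔ actionCommutator R B := by
  refine le_antisymm ((AddSubgroup.closure_le _).2 ?_)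
    (sup_le (actionCommutator_mono le_sup_left) (actionCommutator_mono le_sup_right))
  rintro _ ⟨t, ht, g, rfl⟩
  obtain ⟨a, ha, b, hb, rfl⟩ := AddSubgroup.mem_sup.1 ht
  rw [smul_add, add_sub_add_comm]
  exact add_mem (AddSubgroup.mem_sup_left (AddSubgroup.subset_closure ⟨a, ha, g, rfl⟩))
    (AddSubgroup.mem_sup_right (AddSubgroup.subset_closure ⟨b, hb, g, rfl⟩))

lemma map_actionCommutator (f : T →+[R] V) (A : AddSubgroup T) :
    (actionCommutator R A).map (f : T →+ V) = actionCommutator R (A.map (f : T →+ V)) := by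
  rw [actionCommutator, AddMonoidHom.map_closure, actionCommutator]
  congr 1
  ext x
  constructor
  · rintro ⟨_, ⟨t, ht, g, rfl⟩, rfl⟩
    exact ⟨f t, ⟨t, ht, rfl⟩, g, by simp⟩
  · rintro ⟨_, ⟨t, ht, rfl⟩, g, rfl⟩
    exact ⟨g • t - t, ⟨t, ht, g, rfl⟩, by simp⟩

lemma lowerRCentral_succ_le (i : ℕ) : lowerRCentral R T (i + 1) ≤ lowerRCentral R T i := by
  induction i with
  | zero => exact le_top
  | succ i ih => exact actionCommutator_mono ih

lemma lowerRCentral_antitone : Antitone (lowerRCentral R T) :=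
  antitone_nat_of_succ_le lowerRCentral_succ_le

lemma map_lowerRCentral_le (f : T →+[R] V) (i : ℕ) :
    (lowerRCentral R T i).map (f : T →+ V) ≤ lowerRCentral R V i := by
  induction i with
  | zero => exact le_top
  | succ i ih =>
    rw [lowerRCentral_succ, map_actionCommutator]
    exact actionCommutator_mono ih

lemma lowerRCentral_add_eq_map (f : T →+[R] T) {d : ℕ}
    (hd : lowerRCentral R T d = (f : T →+ T).range) (n : ℕ) :
    lowerRCentral R T (n + d) = (lowerRCentral R T n).map (f : T →+ T) := by
  induction n with
  | zero => rw [zero_add, hd, AddMonoidHom.range_eq_map]; rfl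
  | succ n ih => rw [Nat.add_right_comm, lowerRCentral_succ, ih, ← map_actionCommutator]; rfl

lemma IsUniserial.index_lowerRCentral [Infinite T] {p : ℕ} (hU : IsUniserial R T p) (hp : p ≠ 0)
    (i : ℕ) : (lowerRCentral R T i).index = p ^ i := by
  induction i with
  | zero => exact AddSubgroup.index_top
  | succ i ih =>
    have hne : lowerRCentral R T i ≠ ⊥ := fun h => pow_ne_zero i hp <| by
      rw [← ih, h, AddSubgroup.index_bot, Nat.card_eq_zero_of_infinite]
    rw [← AddSubgroup.relIndex_mul_index (lowerRCentral_succ_le i), hU i hne, ih, pow_succ']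

section InvariantSubgroup

variable {A : AddSubgroup T} (hA : ∀ g : R, ∀ x ∈ A, g • x ∈ A)
include hA

lemma lowerRCentral_succ_sup (i : ℕ) :
    lowerRCentral R T (i + 1) ⊔ A = actionCommutator R (lowerRCentral R T i ⊔ A) ⊔ A := by
  rw [actionCommutator_sup, sup_assoc, sup_eq_right.2 (actionCommutator_le_of_smul_mem hA),
    lowerRCentral_succ]

lemma lowerRCentral_sup_eq_of_succ_eq {i : ℕ}
    (h : lowerRCentral R T (i + 1) ⊔ A = lowerRCentral R T i ⊔ A) {j : ℕ} (hij : i ≤ j) :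
    lowerRCentral R T j ⊔ A = lowerRCentral R T i ⊔ A := by
  induction j, hij using Nat.le_induction with
  | base => rfl
  | succ j hij ih => rw [lowerRCentral_succ_sup hA, ih, ← lowerRCentral_succ_sup hA, h]

lemma lowerRCentral_succ_sup_lt {N : ℕ} (hN : lowerRCentral R T N ≤ A) {i : ℕ}
    (hi : lowerRCentral R T i ⊔ A ≠ A) :
    lowerRCentral R T (i + 1) ⊔ A < lowerRCentral R T i ⊔ A := by
  refine lt_of_le_of_ne (sup_le_sup_right (lowerRCentral_succ_le i) A) fun h => hi ?_
  rw [← lowerRCentral_sup_eq_of_succ_eq hA h (le_max_left i N)]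
  exact sup_eq_right.2 ((lowerRCentral_antitone (le_max_right i N)).trans hN)

/-- The subgroups `T_i + A` decrease strictly until they reach `A`, each step multiplying the
index by at least `p`, so they reach `A` within `m` steps. -/
lemma lowerRCentral_le_of_index_eq_pow {p m N : ℕ} (hp : p.Prime)
    (hN : lowerRCentral R T N ≤ A) (hidx : A.index = p ^ m) : lowerRCentral R T m ≤ A := by
  have hdvd : ∀ i, (lowerRCentral R T i ⊔ A).index ∣ p ^ m := fun i =>
    hidx ▸ AddSubgroup.index_dvd_of_le le_sup_right
  have hchain : ∀ i, lowerRCentral R T i ⊔ A = A ∨ p ^ i ∣ (lowerRCentral R T i ⊔ A).index := by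
    intro i
    induction i with
    | zero => exact Or.inr (by simp)
    | succ i ih =>
      by_cases hS : lowerRCentral R T (i + 1) ⊔ A = A
      · exact Or.inl hS
      have hS' : lowerRCentral R T i ⊔ A ≠ A := fun h =>
        hS (le_antisymm ((sup_le_sup_right (lowerRCentral_succ_le i) A).trans h.le) le_sup_right)
      have hlt := lowerRCentral_succ_sup_lt hA hN hS'
      refine Or.inr ?_
      rw [← AddSubgroup.relIndex_mul_index hlt.le, pow_succ']
      exact mul_dvd_mul (AddSubgroup.prime_dvd_relIndex_of_lt hp hlt (hdvd _))
        (ih.resolve_left hS')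
  have hm : lowerRCentral R T m ⊔ A = A := by
    refine (hchain m).elim id fun h => (AddSubgroup.eq_of_le_of_index_eq le_sup_right ?_ ?_).symm
    · exact hidx ▸ Nat.dvd_antisymm (hdvd m) h
    · simp [hidx, hp.ne_zero]
  exact sup_eq_right.1 hm

end InvariantSubgroup

end LowerRCentral

section Nilpotency

open Multiplicative
open SemidirectProduct (inl inr inl_aut)
open scoped commutatorElement

variable {R T} {V : Type*} [AddCommGroup V] [DistribMulAction R V]

-- `SemidirectProduct` only exists for multiplicative groups.
variable (R V) in
def multiplicativeAut : R →* MulAut (Multiplicative V) :=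
  (MulAutMultiplicative V).symm.toMonoidHom.comp (DistribMulAction.toAddAut R V)

lemma multiplicativeAut_apply (g : R) (v : V) :
    multiplicativeAut R V g (ofAdd v) = ofAdd (g • v) :=
  rfl

lemma commutatorElement_inl_inr (v : V) (g : R) :
    ⁅(inl (ofAdd v) : Multiplicative V ⋊[multiplicativeAut R V] R),
      (inr g : Multiplicative V ⋊[multiplicativeAut R V] R)⁆ = inl (ofAdd (v - g • v)) := by
  rw [commutatorElement_def, mul_assoc, mul_assoc, ← mul_assoc (inr g), ← map_inv inl,
    ← map_inv inr, ← inl_aut, ← map_mul, ← ofAdd_neg, multiplicativeAut_apply, ← ofAdd_add,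
    smul_neg, ← sub_eq_add_neg]

lemma lowerRCentral_le_comap_lowerCentralSeries (i : ℕ) :
    lowerRCentral R V i ≤ Subgroup.toAddSubgroup' ((Subgroup.lowerCentralSeries ⊤ i).comap
      (inl : Multiplicative V →* Multiplicative V ⋊[multiplicativeAut R V] R)) := by
  induction i with
  | zero => exact le_top
  | succ i ih =>
    refine (AddSubgroup.closure_le _).2 ?_
    rintro _ ⟨v, hv, g, rfl⟩
    rw [SetLike.mem_coe, Subgroup.mem_toAddSubgroup', Subgroup.mem_comap, ← neg_sub, ofAdd_neg,
      map_inv, ← commutatorElement_inl_inr]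
    exact inv_mem (Subgroup.commutator_mem_commutator (ih hv) (Subgroup.mem_top _))

lemma exists_lowerRCentral_eq_bot {p : ℕ} [Fact p.Prime] [Finite R] [Finite V]
    (hR : IsPGroup p R) (hV : ∀ v : V, p • v = 0) : ∃ N, lowerRCentral R V N = ⊥ := by
  let G := Multiplicative V ⋊[multiplicativeAut R V] R
  have : Finite G := Finite.of_equiv _ SemidirectProduct.equivProd.symm
  have hV' : IsPGroup p (Multiplicative V) := fun v =>
    ⟨1, by rw [pow_one, ← ofAdd_toAdd v, ← ofAdd_nsmul, hV, ofAdd_zero]⟩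
  obtain ⟨a, ha⟩ := IsPGroup.iff_card.1 hV'
  obtain ⟨b, hb⟩ := IsPGroup.iff_card.1 hR
  have hG : IsPGroup p G := IsPGroup.of_card (n := a + b) (by simp [G, ha, hb, pow_add])
  obtain ⟨N, hN⟩ := Subgroup.nilpotent_iff_lowerCentralSeries.1 hG.isNilpotent
  refine ⟨N, eq_bot_iff.2 ((lowerRCentral_le_comap_lowerCentralSeries N).trans ?_)⟩
  rw [hN, MonoidHom.comap_bot, (MonoidHom.ker_eq_bot_iff _).2 SemidirectProduct.inl_injective]
  simp

abbrev quotientDistribMulAction {A : AddSubgroup T} (hA : ∀ g : R, ∀ x ∈ A, g • x ∈ A) :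
    DistribMulAction R (T ⧸ A) :=
  letI : SMul R (T ⧸ A) :=
    ⟨fun g => QuotientAddGroup.map A A (DistribSMul.toAddMonoidHom T g) (hA g)⟩
  (QuotientAddGroup.mk'_surjective A).distribMulAction (QuotientAddGroup.mk' A) fun _ _ => rfl

lemma exists_lowerRCentral_le {p : ℕ} [Fact p.Prime] [Finite R] (hR : IsPGroup p R)
    {A : AddSubgroup T} [A.FiniteIndex] (hA : ∀ g : R, ∀ x ∈ A, g • x ∈ A)
    (hpA : ∀ t : T, p • t ∈ A) : ∃ N, lowerRCentral R T N ≤ A := by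
  let := quotientDistribMulAction hA
  let π : T →+[R] T ⧸ A := { QuotientAddGroup.mk' A with map_smul' := fun _ _ => rfl }
  have hV : ∀ v : T ⧸ A, p • v = 0 := fun v => QuotientAddGroup.induction_on v fun t =>
    (QuotientAddGroup.eq_zero_iff _).2 (hpA t)
  obtain ⟨N, hN⟩ := exists_lowerRCentral_eq_bot hR hV
  refine ⟨N, fun t ht => (QuotientAddGroup.eq_zero_iff t).1 ?_⟩
  have h := map_lowerRCentral_le π N ⟨t, ht, rfl⟩
  rwa [hN, AddSubgroup.mem_bot] at h

end Nilpotency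

lemma AddSubgroup.index_range_nsmul_of_free {A M : Type*} [Ring A] [StrongRankCondition A]
    [AddCommGroup M] [Module A M] [Module.Free A M] [Module.Finite A M] (n : ℕ) :
    (nsmulAddMonoidHom (α := M) n).range.index =
      (nsmulAddMonoidHom (α := A) n).range.index ^ Module.finrank A M :=
  calc
    _ = (nsmulAddMonoidHom (α := Fin (Module.finrank A M) → A) n).range.index := by
      simpa [AddEquiv.map_range_nsmulAddMonoidHom]
        using (AddSubgroup.index_map_equiv (nsmulAddMonoidHom (α := M) n).range
                (Module.finBasis A M).equivFun.toAddEquiv).symm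
    _ = _ := by
      simp [AddSubgroup.index_eq_card,
        Nat.card_congr (QuotientAddGroup.addEquivPiModRangeNSMulAddMonoidHom _ n).toEquiv,
        Nat.card_fun]

lemma PadicInt.index_range_nsmul_p (p : ℕ) [Fact p.Prime] :
    (nsmulAddMonoidHom (α := ℤ_[p]) p).range.index = p := by
  have hrange : (nsmulAddMonoidHom (α := ℤ_[p]) p).range
      = (PadicInt.toZMod (p := p)).toAddMonoidHom.ker := by
    ext z
    simp only [AddMonoidHom.mem_range, nsmulAddMonoidHom_apply, AddMonoidHom.mem_ker,
      RingHom.toAddMonoidHom_eq_coe, AddMonoidHom.coe_coe, ← RingHom.mem_ker, ker_toZMod,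
      maximalIdeal_eq_span_p, Ideal.mem_span_singleton', nsmul_eq_mul, mul_comm]
  rw [hrange, AddSubgroup.index_ker,
    AddMonoidHom.range_eq_top.2 (ZMod.ringHom_surjective PadicInt.toZMod)]
  simp

theorem lowerRCentral_add_rank_eq_p_smul (p : ℕ) [Fact p.Prime]
    [Fintype R] (hR : IsPGroup p R)
    [Module (PadicInt p) T]
    [Module.Free (PadicInt p) T] [Module.Finite (PadicInt p) T]
    (d : ℕ) (hd : d = Module.finrank (PadicInt p) T) (hd1 : 1 ≤ d)
    (hU : IsUniserial R T p)
    (n : ℕ) :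
    ∀ x : T, x ∈ lowerRCentral R T (n + d) ↔ ∃ t ∈ lowerRCentral R T n, x = p • t := by
  have hp : p.Prime := Fact.out
  let f : T →+[R] T := { nsmulAddMonoidHom p with map_smul' := fun g t => (smul_comm g p t).symm }
  set P := (f : T →+ T).range
  have hP : ∀ g : R, ∀ x ∈ P, g • x ∈ P := by
    rintro g _ ⟨t, rfl⟩
    exact ⟨g • t, f.map_smul g t⟩
  have hPidx : P.index = p ^ d := by
    rw [show P = (nsmulAddMonoidHom p).range from rfl,
      AddSubgroup.index_range_nsmul_of_free (A := ℤ_[p]), PadicInt.index_range_nsmul_p, hd]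
  have : Nontrivial T := Module.nontrivial_of_finrank_pos (R := ℤ_[p]) (hd ▸ hd1)
  have : Infinite T := Module.Free.infinite ℤ_[p] T
  have hidx := hU.index_lowerRCentral hp.ne_zero
  have : P.FiniteIndex := ⟨by simp [hPidx, hp.ne_zero]⟩
  obtain ⟨N, hN⟩ := exists_lowerRCentral_le hR hP fun t => ⟨t, rfl⟩
  have hTd : lowerRCentral R T d = P :=
    AddSubgroup.eq_of_le_of_index_eq (lowerRCentral_le_of_index_eq_pow hP hp hN hPidx)
      (by rw [hPidx, hidx]) (by simp [hidx, hp.ne_zero])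
  intro x
  rw [lowerRCentral_add_eq_map f hTd n, AddSubgroup.mem_map]
  exact exists_congr fun t => and_congr_right fun _ => eq_comm
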